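/- arXiv:math/0507513 — 2 statements merged into one kernel-verified Lean document; each statement's English description precedes it below -/
import Mathlib

section
/- Let k have characteristic zero, E a finite dimensional k-vector space with totally ordered basis e_1 < ... < e_n, and ν : E → E linear with ν(e_i) ∈ Span(e_j : j < i) for all i. Let I, J ⊆ E be subspaces with exp(ν)(I) = J such that whenever e_i ∈ supp(ν(e_j)) one has e_i ≢_I e_j and e_i ≢_J e_j. Then I = J. -/
/-- The support of `r` with respect to the basis `b`. -/
noncomputable def bSupp {k E : Type*} [Field k] [AddCommGroup E] [Module k E]
    {n : ℕ} (b : Module.Basis (Fin n) k E) (r : E) : Finset (Fin n) :=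
  (b.repr r).support

/-- A nonzero element `r` of a subspace `F` is minimal if it cannot be written as the sum of two
nonzero elements of `F` with disjoint supports. -/
def IsMinimalElem {k E : Type*} [Field k] [AddCommGroup E] [Module k E]
    {n : ℕ} (b : Module.Basis (Fin n) k E) (F : Submodule k E) (r : E) : Prop :=
  r ∈ F ∧ r ≠ 0 ∧
    ¬∃ s t : E, s ∈ F ∧ t ∈ F ∧ s ≠ 0 ∧ t ≠ 0 ∧
      Disjoint (bSupp b s) (bSupp b t) ∧ r = s + t

/-- `≡_F` : the smallest equivalence relation on the basis indices such that `i ≡_F j` whenever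
`e_i` and `e_j` both lie in the support of a common minimal element of `F`. -/
def BasisEquiv {k E : Type*} [Field k] [AddCommGroup E] [Module k E]
    {n : ℕ} (b : Module.Basis (Fin n) k E) (F : Submodule k E) (i j : Fin n) : Prop :=
  Relation.EqvGen (fun i j => ∃ r : E, IsMinimalElem b F r ∧ i ∈ bSupp b r ∧ j ∈ bSupp b r) i j

/-- Truncated exponential `Σ_{l<N} ν^l / l!`. -/
noncomputable def truncExp {k E : Type*} [Field k] [AddCommGroup E] [Module k E]
    (ν : Module.End k E) (N : ℕ) : Module.End k E :=
  ∑ l ∈ Finset.range N, ((l.factorial : k)⁻¹) • ν ^ l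

namespace ExpAux

variable {k E : Type*} [Field k] [AddCommGroup E] [Module k E] {n : ℕ}

open scoped Classical in
noncomputable def pj (b : Module.Basis (Fin n) k E) (S : Set (Fin n)) : Module.End k E :=
  { toFun := fun y => b.repr.symm ((b.repr y).filter (· ∈ S))
    map_add' := by
      intro x y
      apply b.repr.injective
      simp only [map_add, LinearEquiv.apply_symm_apply]
      ext i
      simp only [Finsupp.filter_apply, Finsupp.add_apply]
      split <;> simp
    map_smul' := by
      intro c x
      apply b.repr.injective
      simp only [map_smul, LinearEquiv.apply_symm_apply, RingHom.id_apply]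
      ext i
      simp only [Finsupp.filter_apply, Finsupp.smul_apply]
      split <;> simp }

open scoped Classical in
lemma repr_pj (b : Module.Basis (Fin n) k E) (S : Set (Fin n)) (y : E) (i : Fin n) :
    b.repr (pj b S y) i = if i ∈ S then b.repr y i else 0 := by
  show b.repr (b.repr.symm _) i = _
  rw [LinearEquiv.apply_symm_apply]
  rw [Finsupp.filter_apply]

lemma ext_repr (b : Module.Basis (Fin n) k E) {u v : E}
    (h : ∀ i, b.repr u i = b.repr v i) : u = v := by
  apply b.repr.injective
  ext i
  exact h i

def suppedIn (b : Module.Basis (Fin n) k E) (B : Finset (Fin n)) : Submodule k E where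
  carrier := {y | ∀ i, b.repr y i ≠ 0 → i ∈ B}
  zero_mem' := by intro i hi; simp at hi
  add_mem' := by
    intro x y hx hy i hi
    rw [map_add, Finsupp.add_apply] at hi
    by_cases h1 : b.repr x i ≠ 0
    · exact hx i h1
    · push_neg at h1
      exact hy i (by rw [h1, zero_add] at hi; exact hi)
  smul_mem' := by
    intro c x hx i hi
    rw [map_smul, Finsupp.smul_apply, smul_eq_mul] at hi
    exact hx i (right_ne_zero_of_mul hi)

lemma mem_suppedIn (b : Module.Basis (Fin n) k E) {B : Finset (Fin n)} {y : E} :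
    y ∈ suppedIn b B ↔ ∀ i, b.repr y i ≠ 0 → i ∈ B := Iff.rfl

lemma repr_apply_end (b : Module.Basis (Fin n) k E) (f : Module.End k E) (y : E) (i : Fin n) :
    b.repr (f y) i = ∑ j, b.repr y j * b.repr (f (b j)) i := by
  conv_lhs => rw [← b.sum_repr y]
  rw [map_sum, map_sum, Finsupp.finset_sum_apply]
  congr 1
  ext j
  rw [map_smul, map_smul, Finsupp.smul_apply, smul_eq_mul]

end ExpAux

namespace ExpAux

variable {k E : Type*} [Field k] [AddCommGroup E] [Module k E] {n : ℕ}

section Tri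

variable (b : Module.Basis (Fin n) k E) (ν : Module.End k E)
  (htri : ∀ j i : Fin n, b.repr (ν (b j)) i ≠ 0 → i < j)

include htri

lemma repr_pow_lower : ∀ (l : ℕ) (j i : Fin n), b.repr ((ν ^ l) (b j)) i ≠ 0 →
    (i : ℕ) + l ≤ (j : ℕ) := by
  intro l
  induction l with
  | zero =>
    intro j i h
    simp only [pow_zero, Module.End.one_apply, Module.Basis.repr_self] at h
    rcases eq_or_ne i j with rfl | hne
    · omega
    · exact absurd (Finsupp.single_eq_of_ne hne) h
  | succ l ih =>
    intro j i h
    rw [pow_succ, Module.End.mul_apply, repr_apply_end] at h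
    obtain ⟨p, -, hp⟩ := Finset.exists_ne_zero_of_sum_ne_zero h
    have h1 : b.repr (ν (b j)) p ≠ 0 := left_ne_zero_of_mul hp
    have h2 : b.repr ((ν ^ l) (b p)) i ≠ 0 := right_ne_zero_of_mul hp
    
    have := htri j p h1
    have := ih p i h2
    omega

lemma pow_n_eq_zero : ν ^ n = 0 := by
  apply LinearMap.ext_on_range (b.span_eq)
  intro j
  rw [LinearMap.zero_apply]
  apply ext_repr b
  intro i
  rw [map_zero]
  by_contra h
  have := repr_pow_lower b ν htri n j i (by simpa using h)
  have := j.isLt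
  omega

/-- any sum `∑_{1 ≤ l < n} c l • ν^l` is killed by the n-th power -/
lemma sum_pow_n_eq_zero (c : ℕ → k) :
    (∑ l ∈ Finset.Ico 1 n, c l • ν ^ l) ^ n = 0 := by
  set Q : Module.End k E := ∑ l ∈ Finset.Ico 1 n, c l • ν ^ (l - 1) with hQ
  have hcomm : Commute ν Q := by
    apply Commute.sum_right
    intro l _
    exact (Commute.pow_right (Commute.refl ν) (l - 1)).smul_right _
  have hfac : (∑ l ∈ Finset.Ico 1 n, c l • ν ^ l) = ν * Q := by
    rw [hQ, Finset.mul_sum]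
    apply Finset.sum_congr rfl
    intro l hl
    rw [Finset.mem_Ico] at hl
    rw [mul_smul_comm, ← pow_succ']
    congr 2
    omega
  rw [hfac, hcomm.mul_pow, pow_n_eq_zero b ν htri, zero_mul]

end Tri

end ExpAux

namespace ExpAux

variable {k E : Type*} [Field k] [AddCommGroup E] [Module k E] {n : ℕ}

section Ops

variable (ν : Module.End k E)

/-- `N = truncExp - 1` as an explicit sum -/
noncomputable def Nop (n : ℕ) : Module.End k E :=
  ∑ l ∈ Finset.Ico 1 n, ((l.factorial : k))⁻¹ • ν ^ l

/-- `M` with `(1+M)ν = N` -/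
noncomputable def Mop (n : ℕ) : Module.End k E :=
  ∑ l ∈ Finset.Ico 1 n, (((l + 1).factorial : k))⁻¹ • ν ^ l

lemma truncExp_eq_one_add (hn : 0 < n) : truncExp ν n = 1 + Nop ν n := by
  rw [truncExp, Nop, Finset.range_eq_Ico, Finset.sum_eq_sum_Ico_succ_bot hn]
  simp

lemma nop_eq (hn : 0 < n) (hz : ν ^ n = 0) : ν + Mop ν n * ν = Nop ν n := by
  have h1 : Mop ν n * ν = ∑ l ∈ Finset.Ico 1 n, (((l + 1).factorial : k))⁻¹ • ν ^ (l + 1) := by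
    rw [Mop, Finset.sum_mul]
    apply Finset.sum_congr rfl
    intro l _
    rw [smul_mul_assoc, ← pow_succ]
  have h2 : Nop ν n + ((n.factorial : k))⁻¹ • ν ^ n
      = ∑ l ∈ Finset.Ico 1 (n + 1), ((l.factorial : k))⁻¹ • ν ^ l := by
    rw [Nop, Finset.sum_Ico_succ_top hn]
  have h3 : (∑ l ∈ Finset.Ico 1 (n + 1), ((l.factorial : k))⁻¹ • ν ^ l)
      = ν + ∑ l ∈ Finset.Ico 2 (n + 1), ((l.factorial : k))⁻¹ • ν ^ l := by
    rw [Finset.sum_eq_sum_Ico_succ_bot (by omega)]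
    simp
  have h4 : (∑ l ∈ Finset.Ico 2 (n + 1), ((l.factorial : k))⁻¹ • ν ^ l)
      = ∑ l ∈ Finset.Ico 1 n, (((l + 1).factorial : k))⁻¹ • ν ^ (l + 1) := by
    have he : n + 1 - 2 = n - 1 := by omega
    rw [Finset.sum_Ico_eq_sum_range, Finset.sum_Ico_eq_sum_range, he]
    apply Finset.sum_congr rfl
    intro i _
    have h5 : 2 + i = 1 + i + 1 := by omega
    rw [h5]
  rw [h1, ← h4, ← h3, ← h2, hz, smul_zero, add_zero]

end Ops

end ExpAux

namespace ExpAux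

variable {k E : Type*} [Field k] [AddCommGroup E] [Module k E] {n : ℕ}

lemma pow_apply_mem (K : Submodule k E) (f : Module.End k E)
    (hf : ∀ y ∈ K, f y ∈ K) : ∀ (l : ℕ), ∀ y ∈ K, (f ^ l) y ∈ K := by
  intro l
  induction l with
  | zero => intro y hy; simpa using hy
  | succ l ih =>
    intro y hy
    rw [pow_succ, Module.End.mul_apply]
    exact ih _ (hf y hy)

lemma sum_smul_pow_apply_mem (K : Submodule k E) (f : Module.End k E)
    (hf : ∀ y ∈ K, f y ∈ K) (s : Finset ℕ) (c : ℕ → k) :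
    ∀ y ∈ K, (∑ l ∈ s, c l • f ^ l) y ∈ K := by
  intro y hy
  rw [LinearMap.sum_apply]
  exact Submodule.sum_mem K fun l _ => by
    rw [LinearMap.smul_apply]
    exact Submodule.smul_mem K _ (pow_apply_mem K f hf l y hy)

lemma iterate_inv (M : Module.End k E) (w u : E) (h : w = u + M u) :
    ∀ p : ℕ, u = (∑ i ∈ Finset.range p, ((-1 : k) ^ i) • (M ^ i) w)
      + ((-1 : k) ^ p) • (M ^ p) u := by
  intro p
  induction p with
  | zero => simp
  | succ p ih =>
    have hu : u = w - M u := by rw [h]; abel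
    have h2 : (M ^ p) u = (M ^ p) w - (M ^ (p + 1)) u := by
      conv_lhs => rw [hu]
      rw [map_sub, pow_succ, Module.End.mul_apply]
    rw [Finset.sum_range_succ]
    conv_lhs => rw [ih, h2]
    have hsc : ((-1 : k) ^ (p + 1)) = -((-1 : k) ^ p) := by ring
    rw [smul_sub, hsc, neg_smul, pow_succ]
    abel

lemma mem_bSupp (b : Module.Basis (Fin n) k E) {y : E} {i : Fin n} :
    i ∈ bSupp b y ↔ b.repr y i ≠ 0 := Finsupp.mem_support_iff

/-- coordinate projections onto unions of `≡_F`-classes preserve `F` -/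
lemma class_proj_mem (b : Module.Basis (Fin n) k E) (F : Submodule k E) :
    ∀ y ∈ F, ∀ i₀ : Fin n, pj b {i | BasisEquiv b F i i₀} y ∈ F := by
  suffices H : ∀ (c : ℕ) (y : E), y ∈ F → (bSupp b y).card ≤ c →
      ∀ i₀, pj b {i | BasisEquiv b F i i₀} y ∈ F by
    exact fun y hy i₀ => H (bSupp b y).card y hy le_rfl i₀
  intro c
  induction c with
  | zero =>
    intro y hy hc i₀
    have hy0 : y = 0 := by
      apply ext_repr b
      intro i
      rw [map_zero, Finsupp.coe_zero, Pi.zero_apply]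
      by_contra hne
      have : i ∈ bSupp b y := mem_bSupp b |>.2 hne
      have := Finset.card_pos.2 ⟨i, this⟩
      omega
    rw [hy0, map_zero]
    exact F.zero_mem
  | succ c ih =>
    intro y hy hc i₀
    by_cases h0 : y = 0
    · rw [h0, map_zero]; exact F.zero_mem
    by_cases hmin : IsMinimalElem b F y
    · by_cases hex : ∃ i, b.repr y i ≠ 0 ∧ BasisEquiv b F i i₀
      · have hpj : pj b {i | BasisEquiv b F i i₀} y = y := by
          apply ext_repr b
          intro p
          rw [repr_pj]
          split
          · rfl
          · rename_i hp
            by_contra hne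
            obtain ⟨i, hi, hrel⟩ := hex
            have hgen : BasisEquiv b F p i :=
              Relation.EqvGen.rel p i ⟨y, hmin, mem_bSupp b |>.2 (fun hz => hne hz.symm),
                mem_bSupp b |>.2 hi⟩
            exact hp (Relation.EqvGen.trans _ _ _ hgen hrel)
        rw [hpj]; exact hy
      · have hpj : pj b {i | BasisEquiv b F i i₀} y = 0 := by
          apply ext_repr b
          intro p
          rw [repr_pj, map_zero, Finsupp.coe_zero, Pi.zero_apply]
          split
          · rename_i hp
            by_contra hne
            exact hex ⟨p, hne, hp⟩
          · rfl
        rw [hpj]; exact F.zero_mem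
    · have hC : ∃ s t : E, s ∈ F ∧ t ∈ F ∧ s ≠ 0 ∧ t ≠ 0 ∧
          Disjoint (bSupp b s) (bSupp b t) ∧ y = s + t := by
        by_contra hnc
        exact hmin ⟨hy, h0, hnc⟩
      obtain ⟨s, t, hsF, htF, hs0, ht0, hdisj, rfl⟩ := hC
      have hsupp : bSupp b (s + t) = bSupp b s ∪ bSupp b t := by
        show (b.repr (s + t)).support = _
        rw [map_add]
        exact Finsupp.support_add_eq hdisj
      have hcard : (bSupp b s).card + (bSupp b t).card ≤ c + 1 := by
        rw [← Finset.card_union_of_disjoint hdisj, ← hsupp]; exact hc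
      have hsne : (bSupp b s).Nonempty := Finsupp.support_nonempty_iff.2
        (fun hz => hs0 (by rwa [LinearEquiv.map_eq_zero_iff] at hz))
      have htne : (bSupp b t).Nonempty := Finsupp.support_nonempty_iff.2
        (fun hz => ht0 (by rwa [LinearEquiv.map_eq_zero_iff] at hz))
      have hs : (bSupp b s).card ≤ c := by
        have := Finset.card_pos.2 htne; omega
      have ht : (bSupp b t).card ≤ c := by
        have := Finset.card_pos.2 hsne; omega
      rw [map_add]
      exact F.add_mem (ih s hsF hs i₀) (ih t htF ht i₀)

lemma hollow (b : Module.Basis (Fin n) k E) (ν : Module.End k E) (σ : Fin n → Fin n → Prop)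
    (hsymm : ∀ {a c}, σ a c → σ c a) (htrans : ∀ {a c d}, σ a c → σ c d → σ a d)
    (hb : ∀ i j, σ i j → b.repr (ν (b j)) i = 0) (x : E) (i₀ : Fin n)
    (hx : ∀ j, b.repr x j ≠ 0 → σ j i₀) :
    ∀ i, σ i i₀ → b.repr (ν x) i = 0 := by
  intro i hi
  rw [repr_apply_end]
  apply Finset.sum_eq_zero
  intro j _
  by_cases hj : b.repr x j = 0
  · rw [hj, zero_mul]
  · rw [hb i j (htrans hi (hsymm (hx j hj))), mul_zero]

end ExpAux

namespace ExpAux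

variable {k E : Type*} [Field k] [AddCommGroup E] [Module k E] {n : ℕ}

lemma pj_supp (b : Module.Basis (Fin n) k E) (S : Set (Fin n)) {B : Finset (Fin n)} {y : E}
    (hy : y ∈ suppedIn b B) : pj b S y ∈ suppedIn b B := by
  intro i hi
  rw [repr_pj] at hi
  apply hy
  revert hi
  split
  · exact id
  · intro h; exact absurd rfl h

lemma pj_basis_mem (b : Module.Basis (Fin n) k E) (S : Set (Fin n)) (p : Fin n) (hp : p ∈ S) :
    pj b S (b p) = b p := by
  apply ext_repr b
  intro i
  rw [repr_pj]
  split
  · rfl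
  · rename_i hi
    rw [Module.Basis.repr_self, Finsupp.single_apply]
    rw [if_neg]
    intro h
    exact hi (h ▸ hp)

lemma pj_basis_not_mem (b : Module.Basis (Fin n) k E) (S : Set (Fin n)) (p : Fin n) (hp : p ∉ S) :
    pj b S (b p) = 0 := by
  apply ext_repr b
  intro i
  rw [repr_pj, map_zero, Finsupp.coe_zero, Pi.zero_apply]
  split
  · rename_i hi
    rw [Module.Basis.repr_self, Finsupp.single_apply, if_neg]
    intro h
    exact hp (h ▸ hi)
  · rfl

lemma pj_pj (b : Module.Basis (Fin n) k E) (S T : Set (Fin n)) (y : E) :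
    pj b S (pj b T y) = pj b T (pj b S y) := by
  apply ext_repr b
  intro i
  rw [repr_pj, repr_pj, repr_pj, repr_pj]
  by_cases h1 : i ∈ S <;> by_cases h2 : i ∈ T <;> simp [h1, h2]

set_option maxHeartbeats 2000000 in
lemma aux (b : Module.Basis (Fin n) k E) :
    ∀ (Nb : ℕ) (A : Finset (Fin n)), A.card ≤ Nb →
    ∀ (ν : Module.End k E),
      (∀ j i : Fin n, b.repr (ν (b j)) i ≠ 0 → i < j) →
      (∀ j ∈ A, ∀ i : Fin n, b.repr (ν (b j)) i ≠ 0 → i ∈ A) →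
    ∀ (I J : Submodule k E), I ≤ suppedIn b A →
    ∀ (σI σJ : Fin n → Fin n → Prop), Equivalence σI → Equivalence σJ →
      (∀ y ∈ I, ∀ i₀, pj b {i | σI i i₀} y ∈ I) →
      (∀ y ∈ J, ∀ i₀, pj b {i | σJ i i₀} y ∈ J) →
      (∀ i j, σI i j → b.repr (ν (b j)) i = 0) →
      (∀ i j, σJ i j → b.repr (ν (b j)) i = 0) →
      Submodule.map (truncExp ν n) I = J →
      I = J ∧ ∀ y ∈ I, ν y ∈ I := by
  intro Nb
  induction Nb with
  | zero =>
    intro A hcard ν htri hA I J hI σI σJ hσI hσJ haI haJ hbI hbJ hIJ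
    have hIbot : I = ⊥ := by
      rw [Submodule.eq_bot_iff]
      intro y hy
      apply ext_repr b
      intro i
      rw [map_zero, Finsupp.coe_zero, Pi.zero_apply]
      by_contra hne
      have := hI hy i hne
      rw [Finset.card_eq_zero.1 (Nat.le_zero.1 hcard)] at this
      exact absurd this (Finset.notMem_empty i)
    constructor
    · rw [hIbot, ← hIJ, hIbot, Submodule.map_bot]
    · intro y hy
      rw [hIbot] at hy
      rw [Submodule.mem_bot] at hy
      rw [hy, map_zero]
      exact I.zero_mem
  | succ Nb ih =>
    intro A hcard ν htri hA I J hI σI σJ hσI hσJ haI haJ hbI hbJ hIJ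
    by_cases hAe : A = ∅
    · -- empty case, same as base
      have hIbot : I = ⊥ := by
        rw [Submodule.eq_bot_iff]
        intro y hy
        apply ext_repr b
        intro i
        rw [map_zero, Finsupp.coe_zero, Pi.zero_apply]
        by_contra hne
        have := hI hy i hne
        rw [hAe] at this
        exact absurd this (Finset.notMem_empty i)
      constructor
      · rw [hIbot, ← hIJ, hIbot, Submodule.map_bot]
      · intro y hy
        rw [hIbot, Submodule.mem_bot] at hy
        rw [hy, map_zero]
        exact I.zero_mem
    have hAne : A.Nonempty := Finset.nonempty_iff_ne_empty.2 hAe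
    set t := A.max' hAne with ht
    set m := A.min' hAne with hm
    have hn : 0 < n := t.pos
    have hνn : ν ^ n = 0 := pow_n_eq_zero b ν htri
    set No := Nop ν n with hNo
    set Mo := Mop ν n with hMo
    have hφ : truncExp ν n = 1 + No := truncExp_eq_one_add ν hn
    have hid : ν + Mo * ν = No := nop_eq ν hn hνn
    have hνbm : ν (b m) = 0 := by
      apply ext_repr b
      intro i
      rw [map_zero, Finsupp.coe_zero, Pi.zero_apply]
      by_contra h
      exact absurd (htri m i h) (not_lt.2 (A.min'_le i (hA m (A.min'_mem hAne) i h)))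
    have hpow0m : ∀ l : ℕ, 1 ≤ l → (ν ^ l) (b m) = 0 := by
      intro l hl
      obtain ⟨p, rfl⟩ : ∃ p, l = p + 1 := ⟨l - 1, by omega⟩
      rw [pow_succ, Module.End.mul_apply, hνbm, map_zero]
    have hMobm : Mo (b m) = 0 := by
      rw [hMo, Mop, LinearMap.sum_apply]
      apply Finset.sum_eq_zero
      intro l hl
      rw [LinearMap.smul_apply, hpow0m l (Finset.mem_Ico.1 hl).1, smul_zero]
    have hMopowbm : ∀ i : ℕ, 1 ≤ i → (Mo ^ i) (b m) = 0 := by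
      intro i hi
      obtain ⟨p, rfl⟩ : ∃ p, i = p + 1 := ⟨i - 1, by omega⟩
      rw [pow_succ, Module.End.mul_apply, hMobm, map_zero]
    have hNobm : No (b m) = 0 := by
      rw [hNo, Nop, LinearMap.sum_apply]
      apply Finset.sum_eq_zero
      intro l hl
      rw [LinearMap.smul_apply, hpow0m l (Finset.mem_Ico.1 hl).1, smul_zero]
    -- stability of suppedIn A under ν
    have hνA : ∀ y ∈ suppedIn b A, ν y ∈ suppedIn b A := by
      intro y hy i hi
      rw [repr_apply_end] at hi
      obtain ⟨j, -, hj⟩ := Finset.exists_ne_zero_of_sum_ne_zero hi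
      exact hA j (hy j (left_ne_zero_of_mul hj)) i (right_ne_zero_of_mul hj)
    have hNoA : ∀ y ∈ suppedIn b A, No y ∈ suppedIn b A := by
      intro y hy
      rw [hNo, Nop]
      exact sum_smul_pow_apply_mem _ ν hνA _ _ y hy
    -- Nop kills the top coordinate
    have hpowt : ∀ l : ℕ, 1 ≤ l → ∀ y ∈ suppedIn b A, b.repr ((ν ^ l) y) t = 0 := by
      intro l hl y hy
      rw [repr_apply_end]
      apply Finset.sum_eq_zero
      intro j _
      by_cases hj : b.repr y j = 0
      · rw [hj, zero_mul]
      by_cases hz : b.repr ((ν ^ l) (b j)) t = 0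
      · rw [hz, mul_zero]
      exfalso
      have h1 := repr_pow_lower b ν htri l j t hz
      have h2 : (j : ℕ) ≤ (t : ℕ) := A.le_max' j (hy j hj)
      omega
    have hF1 : ∀ y ∈ suppedIn b A, b.repr (No y) t = 0 := by
      intro y hy
      rw [hNo, Nop, LinearMap.sum_apply, map_sum, Finsupp.finset_sum_apply]
      apply Finset.sum_eq_zero
      intro l hl
      rw [LinearMap.smul_apply, map_smul, Finsupp.smul_apply, smul_eq_mul,
        hpowt l (Finset.mem_Ico.1 hl).1 y hy, mul_zero]
    -- the subspace of vectors without top coordinate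
    set V' := suppedIn b (A.erase t) with hV'
    have hmemV' : ∀ y ∈ suppedIn b A, b.repr y t = 0 → y ∈ V' := by
      intro y hy h0 i hi
      rw [Finset.mem_erase]
      exact ⟨fun he => hi (he ▸ h0), hy i hi⟩
    have hV'A : V' ≤ suppedIn b A := fun y hy i hi => (Finset.erase_subset _ _) (hy i hi)
    -- IH for A.erase t
    have hcard_t : (A.erase t).card ≤ Nb := by
      rw [Finset.card_erase_of_mem (A.max'_mem hAne)]
      have := Finset.card_pos.2 hAne
      omega
    have hAt : ∀ j ∈ A.erase t, ∀ i : Fin n, b.repr (ν (b j)) i ≠ 0 → i ∈ A.erase t := by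
      intro j hj i hi
      rw [Finset.mem_erase] at hj ⊢
      refine ⟨?_, hA j hj.2 i hi⟩
      have h1 := htri j i hi
      have h2 : (j : ℕ) ≤ (t : ℕ) := A.le_max' j hj.2
      intro he
      have h3 : (i : ℕ) < (j : ℕ) := h1
      have h4 : (i : ℕ) = (t : ℕ) := by rw [he]
      omega
    have hφA : ∀ y ∈ suppedIn b A, truncExp ν n y ∈ suppedIn b A := by
      intro y hy
      rw [hφ, LinearMap.add_apply, Module.End.one_apply]
      exact Submodule.add_mem _ hy (hNoA y hy)
    have hφt : ∀ y ∈ suppedIn b A, b.repr (truncExp ν n y) t = b.repr y t := by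
      intro y hy
      rw [hφ, LinearMap.add_apply, Module.End.one_apply, map_add, Finsupp.add_apply,
        hF1 y hy, add_zero]
    have hIJt : Submodule.map (truncExp ν n) (I ⊓ V') = J ⊓ V' := by
      apply le_antisymm
      · rintro y ⟨f, hf, rfl⟩
        obtain ⟨hf1, hf2⟩ := Submodule.mem_inf.1 hf
        apply Submodule.mem_inf.2
        constructor
        · rw [← hIJ]; exact Submodule.mem_map_of_mem hf1
        · exact hmemV' _ (hφA f (hI hf1)) (by
            rw [hφt f (hI hf1)]
            by_contra hne
            exact (Finset.mem_erase.1 (hf2 t hne)).1 rfl)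
      · intro y hy
        obtain ⟨hyJ, hyV⟩ := Submodule.mem_inf.1 hy
        rw [← hIJ] at hyJ
        obtain ⟨f, hfI, rfl⟩ := hyJ
        refine ⟨f, Submodule.mem_inf.2 ⟨hfI, ?_⟩, rfl⟩
        apply hmemV' f (hI hfI)
        have h0 : b.repr (truncExp ν n f) t = 0 := by
          by_contra hne
          exact (Finset.mem_erase.1 (hyV t hne)).1 rfl
        rw [← hφt f (hI hfI)]
        exact h0
    have haIt : ∀ y ∈ I ⊓ V', ∀ i₀, pj b {i | σI i i₀} y ∈ I ⊓ V' := by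
      intro y hy i₀
      obtain ⟨h1, h2⟩ := Submodule.mem_inf.1 hy
      exact Submodule.mem_inf.2 ⟨haI y h1 i₀, pj_supp b _ h2⟩
    have haJt : ∀ y ∈ J ⊓ V', ∀ i₀, pj b {i | σJ i i₀} y ∈ J ⊓ V' := by
      intro y hy i₀
      obtain ⟨h1, h2⟩ := Submodule.mem_inf.1 hy
      exact Submodule.mem_inf.2 ⟨haJ y h1 i₀, pj_supp b _ h2⟩
    obtain ⟨hK, hνK⟩ := ih (A.erase t) hcard_t ν htri hAt (I ⊓ V') (J ⊓ V') inf_le_right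
      σI σJ hσI hσJ haIt haJt hbI hbJ hIJt
    set K := I ⊓ V' with hKdef
    have hKI : K ≤ I := inf_le_left
    have hKJ : K ≤ J := by rw [hK]; exact inf_le_left
    have hKV : K ≤ V' := inf_le_right
    have hmemK : ∀ y, y ∈ I → y ∈ suppedIn b A → b.repr y t = 0 → y ∈ K :=
      fun y h1 h2 h3 => Submodule.mem_inf.2 ⟨h1, hmemV' y h2 h3⟩
    have hmemKJ : ∀ y, y ∈ J → y ∈ suppedIn b A → b.repr y t = 0 → y ∈ K := by
      intro y h1 h2 h3
      rw [hK]
      exact Submodule.mem_inf.2 ⟨h1, hmemV' y h2 h3⟩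
    have hMK : ∀ y ∈ K, Mo y ∈ K := by
      intro y hy
      rw [hMo, Mop]
      exact sum_smul_pow_apply_mem _ ν hνK _ _ y hy
    have hNK : ∀ y ∈ K, No y ∈ K := by
      intro y hy
      rw [hNo, Nop]
      exact sum_smul_pow_apply_mem _ ν hνK _ _ y hy
    have hMpowK : ∀ (i : ℕ), ∀ y ∈ K, (Mo ^ i) y ∈ K := fun i => pow_apply_mem K Mo hMK i
    -- IH for A.erase m : quotient by the bottom coordinate
    set P := pj b {i | i ∈ A.erase m} with hP
    have hreprP : ∀ (y : E) (i : Fin n),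
        b.repr (P y) i = if i ∈ A.erase m then b.repr y i else 0 := by
      intro y i
      rw [hP, repr_pj]
      by_cases h : i ∈ A.erase m
      · rw [if_pos h]; rw [if_pos (show i ∈ {i | i ∈ A.erase m} from h)]
      · rw [if_neg h]; rw [if_neg (show i ∉ {i | i ∈ A.erase m} from h)]
    set ν' := P * ν with hν'
    have htri' : ∀ j i : Fin n, b.repr (ν' (b j)) i ≠ 0 → i < j := by
      intro j i hi
      rw [hν', Module.End.mul_apply, hreprP] at hi
      apply htri
      revert hi
      split
      · exact id
      · intro h; exact absurd rfl h
    have hA' : ∀ j ∈ A.erase m, ∀ i : Fin n, b.repr (ν' (b j)) i ≠ 0 → i ∈ A.erase m := by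
      intro j _ i hi
      rw [hν', Module.End.mul_apply, hreprP] at hi
      by_cases h : i ∈ A.erase m
      · exact h
      · rw [if_neg h] at hi; exact absurd rfl hi
    have hcard_m : (A.erase m).card ≤ Nb := by
      rw [Finset.card_erase_of_mem (A.min'_mem hAne)]
      have := Finset.card_pos.2 hAne
      omega
    have hPf : ∀ y ∈ suppedIn b A, P y = y - b.repr y m • b m := by
      intro y hy
      apply ext_repr b
      intro i
      rw [hreprP, map_sub, map_smul, Finsupp.sub_apply, Finsupp.smul_apply,
        Module.Basis.repr_self, smul_eq_mul]
      by_cases him : i = m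
      · subst him
        rw [if_neg (fun hc => (Finset.mem_erase.1 hc).1 rfl), Finsupp.single_eq_same, mul_one,
          sub_self]
      · rw [Finsupp.single_eq_of_ne him, mul_zero, sub_zero]
        by_cases hiA : i ∈ A
        · rw [if_pos (Finset.mem_erase.2 ⟨him, hiA⟩)]
        · rw [if_neg (fun hc => hiA (Finset.mem_erase.1 hc).2)]
          by_contra hne
          exact hiA (hy i (fun hz => hne hz.symm))
    have hpowP : ∀ (l : ℕ), ∀ y ∈ suppedIn b A, (ν' ^ l) (P y) = P ((ν ^ l) y) := by
      intro l
      induction l with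
      | zero => intro y hy; simp
      | succ l ihl =>
        intro y hy
        have hstep : ν' (P y) = P (ν y) := by
          rw [hν', Module.End.mul_apply, hPf y hy, map_sub, map_smul, hνbm, smul_zero, sub_zero]
        have h1 : (ν' ^ (l + 1)) (P y) = (ν' ^ l) (ν' (P y)) := by
          rw [pow_succ, Module.End.mul_apply]
        have h2 : (ν ^ (l + 1)) y = (ν ^ l) (ν y) := by
          rw [pow_succ, Module.End.mul_apply]
        rw [h1, h2, hstep, ihl (ν y) (hνA y hy)]
    have hcomm : ∀ y ∈ suppedIn b A, truncExp ν' n (P y) = P (truncExp ν n y) := by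
      intro y hy
      rw [truncExp, truncExp, LinearMap.sum_apply, LinearMap.sum_apply, map_sum]
      apply Finset.sum_congr rfl
      intro l _
      rw [LinearMap.smul_apply, LinearMap.smul_apply, map_smul, hpowP l y hy]
    have hIJ' : Submodule.map (truncExp ν' n) (Submodule.map P I) = Submodule.map P J := by
      apply le_antisymm
      · rintro y ⟨g, ⟨f, hfI, rfl⟩, rfl⟩
        rw [hcomm f (hI hfI)]
        exact Submodule.mem_map_of_mem (hIJ ▸ Submodule.mem_map_of_mem hfI)
      · rintro y ⟨g, hgJ, rfl⟩
        rw [← hIJ] at hgJ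
        obtain ⟨f, hfI, rfl⟩ := hgJ
        exact ⟨P f, Submodule.mem_map_of_mem hfI, hcomm f (hI hfI)⟩
    have hI' : Submodule.map P I ≤ suppedIn b (A.erase m) := by
      rintro y ⟨f, _, rfl⟩ i hi
      rw [hreprP] at hi
      by_cases h : i ∈ A.erase m
      · exact h
      · rw [if_neg h] at hi; exact absurd rfl hi
    have haI' : ∀ y ∈ Submodule.map P I, ∀ i₀, pj b {i | σI i i₀} y ∈ Submodule.map P I := by
      rintro y ⟨f, hfI, rfl⟩ i₀
      rw [hP, pj_pj]
      exact Submodule.mem_map_of_mem (haI f hfI i₀)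
    have haJ' : ∀ y ∈ Submodule.map P J, ∀ i₀, pj b {i | σJ i i₀} y ∈ Submodule.map P J := by
      rintro y ⟨f, hfJ, rfl⟩ i₀
      rw [hP, pj_pj]
      exact Submodule.mem_map_of_mem (haJ f hfJ i₀)
    have hbI' : ∀ i j, σI i j → b.repr (ν' (b j)) i = 0 := by
      intro i j hσ
      rw [hν', Module.End.mul_apply, hreprP]
      rw [hbI i j hσ]
      split <;> rfl
    have hbJ' : ∀ i j, σJ i j → b.repr (ν' (b j)) i = 0 := by
      intro i j hσ
      rw [hν', Module.End.mul_apply, hreprP]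
      rw [hbJ i j hσ]
      split <;> rfl
    obtain ⟨hPIJ, -⟩ := ih (A.erase m) hcard_m ν' htri' hA' (Submodule.map P I)
      (Submodule.map P J) hI' σI σJ hσI hσJ haI' haJ' hbI' hbJ' hIJ'
    -- Case: no element of I has a top coordinate
    by_cases hItop : ∀ y ∈ I, b.repr y t = 0
    · have hIK : I = K := by
        apply le_antisymm
        · intro y hy
          exact Submodule.mem_inf.2 ⟨hy, hmemV' y (hI hy) (hItop y hy)⟩
        · exact hKI
      have hJV : J ≤ V' := by
        intro y hy
        rw [← hIJ] at hy
        obtain ⟨f, hfI, rfl⟩ := hy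
        exact hmemV' _ (hφA f (hI hfI)) (by rw [hφt f (hI hfI)]; exact hItop f hfI)
      have hJK : J = K := by
        rw [hK]
        exact (inf_eq_left.2 hJV).symm
      exact ⟨hIK.trans hJK.symm, fun y hy => hKI (hνK y (hIK ▸ hy))⟩
    push_neg at hItop
    obtain ⟨x₀, hx₀I, hx₀t⟩ := hItop
    -- Case: the singleton A = {t}
    by_cases hmt : m = t
    · have hA1 : ∀ j ∈ A, j = t := fun j hj =>
        le_antisymm (A.le_max' j hj) (hmt ▸ A.min'_le j hj)
      have hsingle : ∀ y ∈ suppedIn b A, y = b.repr y t • b t := by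
        intro y hy
        apply ext_repr b
        intro i
        rw [map_smul, Finsupp.smul_apply, Module.Basis.repr_self, smul_eq_mul]
        by_cases hit : i = t
        · subst hit
          rw [Finsupp.single_eq_same, mul_one]
        · rw [Finsupp.single_eq_of_ne hit, mul_zero]
          by_contra hne
          exact hit (hA1 i (hy i hne))
      have hνbt : ν (b t) = 0 := hmt ▸ hνbm
      have hν0 : ∀ y ∈ suppedIn b A, ν y = 0 := by
        intro y hy
        conv_lhs => rw [hsingle y hy]
        rw [map_smul, hνbt, smul_zero]
      have hφf : ∀ y ∈ suppedIn b A, truncExp ν n y = y := by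
        intro y hy
        rw [hφ, LinearMap.add_apply, Module.End.one_apply]
        have hNobt : No (b t) = 0 := by rw [← hmt]; exact hNobm
        have : No y = 0 := by
          conv_lhs => rw [hsingle y hy]
          rw [map_smul, hNobt, smul_zero]
        rw [this, add_zero]
      constructor
      · rw [← hIJ]
        apply le_antisymm
        · intro y hy
          exact ⟨y, hy, hφf y (hI hy)⟩
        · intro y hy
          obtain ⟨f, hfI, rfl⟩ := hy
          rw [hφf f (hI hfI)]
          exact hfI
      · intro y hy
        rw [hν0 y (hI hy)]
        exact I.zero_mem
    -- main case : m ≠ t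
    have hV't : ∀ y ∈ V', b.repr y t = 0 := by
      intro y hy
      by_contra hne
      exact (Finset.mem_erase.1 (hy t hne)).1 rfl
    set C : Set (Fin n) := {i | σI i t} with hCdef
    have htC : t ∈ C := hσI.refl t
    set x₁ := pj b C x₀ with hx₁
    have hx₁I : x₁ ∈ I := haI x₀ hx₀I t
    have hx₁t : b.repr x₁ t = b.repr x₀ t := by rw [hx₁, repr_pj, if_pos htC]
    set x := (b.repr x₀ t)⁻¹ • x₁ with hx
    have hxI : x ∈ I := I.smul_mem _ hx₁I
    have hxt : b.repr x t = 1 := by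
      rw [hx, map_smul, Finsupp.smul_apply, smul_eq_mul, hx₁t, inv_mul_cancel₀ hx₀t]
    have hxC : ∀ i, b.repr x i ≠ 0 → i ∈ C := by
      intro i hi
      rw [hx, map_smul, Finsupp.smul_apply, smul_eq_mul, hx₁, repr_pj] at hi
      by_cases h : i ∈ C
      · exact h
      · rw [if_neg h, mul_zero] at hi; exact absurd rfl hi
    have hxA : x ∈ suppedIn b A := hI hxI
    set z := truncExp ν n x with hz
    have hzJ : z ∈ J := by rw [← hIJ]; exact Submodule.mem_map_of_mem hxI
    set w := No x with hw
    have hzxw : z = x + w := by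
      rw [hz, hφ, LinearMap.add_apply, Module.End.one_apply, ← hw]
    have hwA : w ∈ suppedIn b A := by rw [hw]; exact hNoA x hxA
    have hwt : b.repr w t = 0 := by rw [hw]; exact hF1 x hxA
    have hzA : z ∈ suppedIn b A := by rw [hzxw]; exact Submodule.add_mem _ hxA hwA
    have hzt : b.repr z t = 1 := by
      rw [hzxw, map_add, Finsupp.add_apply, hxt, hwt, add_zero]
    -- decompose w = c • b m + κ₀ using the quotient induction
    have hPz : P z ∈ Submodule.map P I := by rw [hPIJ]; exact Submodule.mem_map_of_mem hzJ
    obtain ⟨y₀, hy₀I, hPy₀⟩ := hPz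
    have hy₀A : y₀ ∈ suppedIn b A := hI hy₀I
    have hdiff : ∀ i, i ≠ m → b.repr (z - y₀) i = 0 := by
      intro i him
      rw [map_sub, Finsupp.sub_apply]
      by_cases hiA : i ∈ A.erase m
      · have h1 : b.repr (P y₀) i = b.repr (P z) i := by rw [hPy₀]
        rw [hreprP, hreprP, if_pos hiA, if_pos hiA] at h1
        rw [← h1, sub_self]
      · have hiA' : i ∉ A := fun h => hiA (Finset.mem_erase.2 ⟨him, h⟩)
        have h1 : b.repr z i = 0 := by by_contra hne; exact hiA' (hzA i hne)
        have h2 : b.repr y₀ i = 0 := by by_contra hne; exact hiA' (hy₀A i hne)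
        rw [h1, h2, sub_self]
    set c := b.repr (z - y₀) m with hc
    have hzy₀ : z - y₀ = c • b m := by
      apply ext_repr b
      intro i
      rw [map_smul, Finsupp.smul_apply, Module.Basis.repr_self, smul_eq_mul]
      by_cases him : i = m
      · subst him
        rw [Finsupp.single_eq_same, mul_one, hc]
      · rw [Finsupp.single_eq_of_ne him, mul_zero]
        exact hdiff i him
    have htm : t ≠ m := fun h => hmt h.symm
    have hy₀t : b.repr y₀ t = 1 := by
      have h1 := hdiff t htm
      rw [map_sub, Finsupp.sub_apply, hzt] at h1
      have := sub_eq_zero.1 h1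
      exact this.symm
    set κ₀ := y₀ - x with hκ₀
    have hκ₀K : κ₀ ∈ K := hmemK _ (I.sub_mem hy₀I hxI)
      (Submodule.sub_mem _ hy₀A hxA)
      (by rw [hκ₀, map_sub, Finsupp.sub_apply, hy₀t, hxt, sub_self])
    have hweq : w = c • b m + κ₀ := by
      have h1 : w = (z - y₀) + (y₀ - x) := by rw [hzxw]; abel
      rw [h1, hzy₀, ← hκ₀]
    -- recover ν x from w
    have hwid : w = ν x + Mo (ν x) := by
      have h1 : No x = (ν + Mo * ν) x := by rw [hid]
      rw [hw, h1, LinearMap.add_apply, Module.End.mul_apply]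
    have hMon : Mo ^ n = 0 := by
      rw [hMo, Mop]; exact sum_pow_n_eq_zero b ν htri _
    have hνx_sum : ν x = ∑ i ∈ Finset.range n, ((-1 : k) ^ i) • (Mo ^ i) w := by
      have h1 := iterate_inv Mo w (ν x) hwid n
      rw [hMon] at h1
      simpa using h1
    have hνprop : ∃ κ ∈ K, ν x = c • b m + κ := by
      refine ⟨∑ i ∈ Finset.range n, ((-1 : k) ^ i) • (Mo ^ i) κ₀,
        Submodule.sum_mem _ (fun i _ => K.smul_mem _ (hMpowK i κ₀ hκ₀K)), ?_⟩
      rw [hνx_sum]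
      have hterm : ∀ i ∈ Finset.range n, ((-1 : k) ^ i) • (Mo ^ i) w
          = (if i = 0 then c • b m else 0) + ((-1 : k) ^ i) • (Mo ^ i) κ₀ := by
        intro i _
        rw [hweq, map_add, smul_add]
        congr 1
        by_cases hi0 : i = 0
        · subst hi0; simp
        · rw [if_neg hi0, map_smul, hMopowbm i (by omega), smul_zero, smul_zero]
      rw [Finset.sum_congr rfl hterm, Finset.sum_add_distrib,
        Finset.sum_ite_eq' (Finset.range n) 0 (fun _ => c • b m),
        if_pos (Finset.mem_range.2 hn)]
    have hwK : w ∈ K := by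
      by_cases hbmK : b m ∈ K
      · rw [hweq]; exact K.add_mem (K.smul_mem c hbmK) hκ₀K
      obtain ⟨κ, hκK, hνxeq⟩ := hνprop
      have hcbm : c • b m ∈ K := by
        by_cases h1 : σI m t
        · -- case (i) : m is in the I-class of t
          have hhol := hollow b ν σI hσI.symm hσI.trans hbI x t hxC
          have hpjκK : pj b C κ ∈ K := hmemK _ (haI κ (hKI hκK) t)
            (pj_supp b _ (hV'A (hKV hκK)))
            (by rw [repr_pj, if_pos htC]; exact hV't κ (hKV hκK))
          have heq : c • b m = - pj b C κ := by
            apply ext_repr b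
            intro i
            rw [map_neg, Finsupp.neg_apply, repr_pj, map_smul, Finsupp.smul_apply,
              Module.Basis.repr_self, smul_eq_mul]
            by_cases hσ : i ∈ C
            · have h0 := hhol i hσ
              rw [hνxeq, map_add, Finsupp.add_apply, map_smul, Finsupp.smul_apply,
                Module.Basis.repr_self, smul_eq_mul] at h0
              rw [if_pos hσ]
              exact eq_neg_of_add_eq_zero_left h0
            · rw [if_neg hσ, neg_zero,
                Finsupp.single_eq_of_ne (fun hmi => hσ (show i ∈ C by rw [hmi]; exact h1)), mul_zero]
          rw [heq]; exact K.neg_mem hpjκK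
        · by_cases h2 : σJ m t
          · -- case (ii) : m is in the J-class of t
            set D : Set (Fin n) := {i | σJ i t} with hDdef
            have htD : t ∈ D := hσJ.refl t
            set ζ := pj b D z with hζ
            have hζJ : ζ ∈ J := haJ z hzJ t
            have hζC : ∀ i, b.repr ζ i ≠ 0 → i ∈ D := by
              intro i hi
              rw [hζ, repr_pj] at hi
              by_cases h : i ∈ D
              · exact h
              · rw [if_neg h] at hi; exact absurd rfl hi
            have hζt : b.repr ζ t = 1 := by rw [hζ, repr_pj, if_pos htD, hzt]
            have hzζK : z - ζ ∈ K := hmemKJ _ (J.sub_mem hzJ hζJ)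
              (Submodule.sub_mem _ hzA (by rw [hζ]; exact pj_supp b _ hzA))
              (by rw [map_sub, Finsupp.sub_apply, hzt, hζt, sub_self])
            have hνζ : ν ζ = c • b m + (κ + ν κ₀ - ν (z - ζ)) := by
              have ha : ν ζ = ν z - ν (z - ζ) := by rw [map_sub]; abel
              have hνz : ν z = ν x + ν κ₀ := by
                have h9 : z = x + (c • b m + κ₀) := by rw [hzxw, hweq]
                rw [h9]
                simp only [map_add, map_smul, hνbm, smul_zero, zero_add]
              rw [ha, hνz, hνxeq]
              abel
            have hκtK : κ + ν κ₀ - ν (z - ζ) ∈ K :=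
              K.sub_mem (K.add_mem hκK (hνK κ₀ hκ₀K)) (hνK _ hzζK)
            have hpjκtK : pj b D (κ + ν κ₀ - ν (z - ζ)) ∈ K := hmemKJ _
              (haJ _ (hKJ hκtK) t)
              (pj_supp b _ (hV'A (hKV hκtK)))
              (by rw [repr_pj, if_pos htD]; exact hV't _ (hKV hκtK))
            have hhol := hollow b ν σJ hσJ.symm hσJ.trans hbJ ζ t hζC
            have heq : c • b m = - pj b D (κ + ν κ₀ - ν (z - ζ)) := by
              apply ext_repr b
              intro i
              rw [map_neg, Finsupp.neg_apply, repr_pj, map_smul, Finsupp.smul_apply,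
                Module.Basis.repr_self, smul_eq_mul]
              by_cases hσ : i ∈ D
              · have h0 := hhol i hσ
                rw [hνζ, map_add, Finsupp.add_apply, map_smul, Finsupp.smul_apply,
                  Module.Basis.repr_self, smul_eq_mul] at h0
                rw [if_pos hσ]
                exact eq_neg_of_add_eq_zero_left h0
              · rw [if_neg hσ, neg_zero,
                  Finsupp.single_eq_of_ne (fun hmi => hσ (show i ∈ D by rw [hmi]; exact h2)), mul_zero]
            rw [heq]; exact K.neg_mem hpjκtK
          · -- case (iii) : m is in neither class
            set D1 : Set (Fin n) := {i | σJ i m} with hD1def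
            have hmD1 : m ∈ D1 := hσJ.refl m
            have htD1 : t ∉ D1 := fun h => h2 (hσJ.symm h)
            have hqJ : pj b D1 z ∈ J := haJ z hzJ m
            have hqK : pj b D1 z ∈ K := hmemKJ _ hqJ (pj_supp b _ hzA)
              (by rw [repr_pj, if_neg htD1])
            have hpjbm : pj b D1 (b m) = b m := pj_basis_mem b D1 m hmD1
            have hzeq : z = x + (c • b m + κ₀) := by rw [hzxw, hweq]
            have hqeq : pj b D1 z = pj b D1 x + (c • b m + pj b D1 κ₀) := by
              conv_lhs => rw [hzeq]
              rw [map_add, map_add, (pj b D1).map_smul c (b m), hpjbm]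
            have hpjκ₀K : pj b D1 κ₀ ∈ K := hmemKJ _ (haJ κ₀ (hKJ hκ₀K) m)
              (pj_supp b _ (hV'A (hKV hκ₀K)))
              (by rw [repr_pj, if_neg htD1])
            have hrK : pj b D1 z - pj b D1 κ₀ ∈ K := K.sub_mem hqK hpjκ₀K
            have hreq : pj b D1 z - pj b D1 κ₀ = pj b D1 x + c • b m := by
              rw [hqeq]; abel
            have hpjbm0 : pj b C (b m) = 0 := pj_basis_not_mem b C m h1
            set s := pj b C (pj b D1 x) with hs
            have hseq : s = pj b C (pj b D1 z - pj b D1 κ₀) := by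
              rw [hreq, map_add, (pj b C).map_smul c (b m), hpjbm0, smul_zero, add_zero, hs]
            have hsI : s ∈ I := by rw [hseq]; exact haI _ (hKI hrK) t
            have hsK : s ∈ K := by
              rw [hseq]
              exact hmemK _ (haI _ (hKI hrK) t) (pj_supp b _ (hV'A (hKV hrK)))
                (by rw [repr_pj, if_pos htC]; exact hV't _ (hKV hrK))
            set x₂ := x - s with hx₂
            have hx₂I : x₂ ∈ I := I.sub_mem hxI hsI
            have hNosK : No s ∈ K := hNK s hsK
            have hw₂ : No x₂ = c • b m + (κ₀ - No s) := by
              rw [hx₂, map_sub, ← hw, hweq]; abel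
            have hz₂J : x₂ + No x₂ ∈ J := by
              rw [← hIJ]
              exact ⟨x₂, hx₂I, by rw [hφ, LinearMap.add_apply, Module.End.one_apply]⟩
            have hκ₂K : κ₀ - No s ∈ K := K.sub_mem hκ₀K hNosK
            have hx₂A : x₂ ∈ suppedIn b A := hI hx₂I
            have hz₂A : x₂ + No x₂ ∈ suppedIn b A :=
              Submodule.add_mem _ hx₂A (hNoA x₂ hx₂A)
            have hq₂K : pj b D1 (x₂ + No x₂) ∈ K := hmemKJ _ (haJ _ hz₂J m)
              (pj_supp b _ hz₂A) (by rw [repr_pj, if_neg htD1])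
            have hpjx₂ : pj b D1 x₂ = 0 := by
              apply ext_repr b
              intro i
              rw [repr_pj, map_zero, Finsupp.coe_zero, Pi.zero_apply]
              by_cases hi : i ∈ D1
              · rw [if_pos hi, hx₂, map_sub, Finsupp.sub_apply]
                by_cases hiC : i ∈ C
                · rw [hs, repr_pj, repr_pj, if_pos hiC, if_pos hi, sub_self]
                · have hxi : b.repr x i = 0 := by
                    by_contra hne; exact hiC (hxC i hne)
                  have hsi : b.repr s i = 0 := by rw [hs, repr_pj, if_neg hiC]
                  rw [hxi, hsi, sub_self]
              · rw [if_neg hi]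
            have hq₂eq : pj b D1 (x₂ + No x₂) = c • b m + pj b D1 (κ₀ - No s) := by
              rw [map_add, hpjx₂, zero_add, hw₂, map_add, (pj b D1).map_smul c (b m), hpjbm]
            have hpjκ₂K : pj b D1 (κ₀ - No s) ∈ K := hmemKJ _ (haJ _ (hKJ hκ₂K) m)
              (pj_supp b _ (hV'A (hKV hκ₂K)))
              (by rw [repr_pj, if_neg htD1])
            have hfin : c • b m = pj b D1 (x₂ + No x₂) - pj b D1 (κ₀ - No s) := by
              rw [hq₂eq]; abel
            rw [hfin]; exact K.sub_mem hq₂K hpjκ₂K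
      have hc0 : c = 0 := by
        by_contra hc0
        refine hbmK ?_
        have h1 := K.smul_mem c⁻¹ hcbm
        rwa [smul_smul, inv_mul_cancel₀ hc0, one_smul] at h1
      rw [hweq, hc0, zero_smul, zero_add]
      exact hκ₀K
    -- endgame
    have hνxK : ν x ∈ K := by
      rw [hνx_sum]
      exact Submodule.sum_mem _ fun i _ => K.smul_mem _ (hMpowK i w hwK)
    have hzI : z ∈ I := by rw [hzxw]; exact I.add_mem hxI (hKI hwK)
    have hdecomp : ∀ f ∈ I, f - b.repr f t • x ∈ K := by
      intro f hf
      exact hmemK _ (I.sub_mem hf (I.smul_mem _ hxI))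
        (Submodule.sub_mem _ (hI hf) (Submodule.smul_mem _ _ hxA))
        (by rw [map_sub, Finsupp.sub_apply, map_smul, Finsupp.smul_apply, smul_eq_mul, hxt,
          mul_one, sub_self])
    have hJI : J ≤ I := by
      intro y hy
      rw [← hIJ] at hy
      obtain ⟨f, hfI, rfl⟩ := hy
      have hf0 := hdecomp f hfI
      have hφdecomp : truncExp ν n f
          = ((f - b.repr f t • x) + No (f - b.repr f t • x)) + b.repr f t • z := by
        rw [hφ, LinearMap.add_apply, Module.End.one_apply, hzxw, hw, map_sub, map_smul,
          smul_add]
        abel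
      rw [hφdecomp]
      exact I.add_mem (hKI (K.add_mem hf0 (hNK _ hf0))) (I.smul_mem _ hzI)
    have hGinj : Function.Injective (truncExp ν n) := by
      have hNn : No ^ n = 0 := by rw [hNo, Nop]; exact sum_pow_n_eq_zero b ν htri _
      have hker : ∀ u, truncExp ν n u = 0 → u = 0 := by
        intro u hu
        rw [hφ, LinearMap.add_apply, Module.End.one_apply] at hu
        have h1 : u = -(No u) := eq_neg_of_add_eq_zero_left hu
        have h3 : ∀ p : ℕ, u = ((-1 : k) ^ p) • (No ^ p) u := by
          intro p
          induction p with
          | zero => simp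
          | succ p ihp =>
            have hstep : (No ^ p) u = -((No ^ (p + 1)) u) := by
              conv_lhs => rw [h1]
              rw [map_neg, pow_succ, Module.End.mul_apply]
            calc u = ((-1 : k) ^ p) • (No ^ p) u := ihp
              _ = ((-1 : k) ^ p) • -((No ^ (p + 1)) u) := by rw [hstep]
              _ = ((-1 : k) ^ (p + 1)) • (No ^ (p + 1)) u := by
                  rw [smul_neg, pow_succ (-1 : k) p, mul_neg_one, neg_smul]
        have h4 := h3 n
        rw [hNn] at h4
        simpa using h4
      intro u v huv
      have h5 : truncExp ν n (u - v) = 0 := by rw [map_sub, huv, sub_self]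
      exact sub_eq_zero.1 (hker _ h5)
    haveI : Module.Finite k E := Module.Finite.of_basis b
    have hfr : Module.finrank k I = Module.finrank k J := by
      rw [← hIJ]
      exact (Submodule.equivMapOfInjective (truncExp ν n) hGinj I).finrank_eq
    have hIJeq : I = J := (Submodule.eq_of_le_of_finrank_le hJI hfr.le).symm
    refine ⟨hIJeq, ?_⟩
    intro y hy
    have hy0 := hdecomp y hy
    have hνy : ν y = ν (y - b.repr y t • x) + b.repr y t • ν x := by
      rw [map_sub, map_smul]; abel
    rw [hνy]
    exact I.add_mem (hKI (hνK _ hy0)) (I.smul_mem _ (hKI hνxK))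

end ExpAux

namespace ExpAux

variable {k E : Type*} [Field k] [AddCommGroup E] [Module k E] {n : ℕ}

lemma repr_eq_zero_of_mem_span (b : Module.Basis (Fin n) k E) (s : Set (Fin n)) {x : E}
    (hx : x ∈ Submodule.span k (b '' s)) : ∀ i, i ∉ s → b.repr x i = 0 := by
  let Q : Submodule k E :=
    { carrier := {y | ∀ i, i ∉ s → b.repr y i = 0}
      zero_mem' := by intro i _; simp
      add_mem' := by
        intro u v hu hv i hi
        rw [map_add, Finsupp.add_apply, hu i hi, hv i hi, add_zero]
      smul_mem' := by
        intro a u hu i hi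
        rw [map_smul, Finsupp.smul_apply, hu i hi, smul_zero] }
  have hle : Submodule.span k (b '' s) ≤ Q := by
    rw [Submodule.span_le]
    rintro _ ⟨j, hj, rfl⟩ i hi
    rw [Module.Basis.repr_self]
    exact Finsupp.single_eq_of_ne (fun h => hi (h ▸ hj))
  exact hle hx

end ExpAux

/-- Let `k` have characteristic zero, `E` a finite dimensional `k`-vector space with totally
ordered basis `e_1 < … < e_n`, and `ν : E → E` linear with `ν e_i ∈ Span(e_j : j < i)` for all
`i` (so `ν` is nilpotent with `ν ^ n = 0`, and `exp ν` is the finite sum `Σ_{l<n} ν^l/l!`).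
Let `I, J ⊆ E` be subspaces with `exp(ν)(I) = J` such that whenever `e_i ∈ supp (ν e_j)` one has
`e_i ≢_I e_j` and `e_i ≢_J e_j`.  Then `I = J`. -/
theorem eq_of_exp_map_eq {k E : Type*} [Field k] [CharZero k] [AddCommGroup E] [Module k E]
    {n : ℕ} (b : Module.Basis (Fin n) k E) (ν : Module.End k E)
    (hν : ∀ i : Fin n, ν (b i) ∈ Submodule.span k (b '' {j | j < i}))
    (I J : Submodule k E)
    (hIJ : Submodule.map (truncExp ν n) I = J)
    (hsupp : ∀ i j : Fin n, i ∈ bSupp b (ν (b j)) →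
      ¬ BasisEquiv b I i j ∧ ¬ BasisEquiv b J i j) :
    I = J := by
  have htri : ∀ j i : Fin n, b.repr (ν (b j)) i ≠ 0 → i < j := by
    intro j i h
    by_contra hlt
    exact h (ExpAux.repr_eq_zero_of_mem_span b _ (hν j) i hlt)
  have hbI : ∀ i j, BasisEquiv b I i j → b.repr (ν (b j)) i = 0 := by
    intro i j hσ
    by_contra h
    exact (hsupp i j (Finsupp.mem_support_iff.2 h)).1 hσ
  have hbJ : ∀ i j, BasisEquiv b J i j → b.repr (ν (b j)) i = 0 := by
    intro i j hσ
    by_contra h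
    exact (hsupp i j (Finsupp.mem_support_iff.2 h)).2 hσ
  have hσI : Equivalence (BasisEquiv b I) := Relation.EqvGen.is_equivalence _
  have hσJ : Equivalence (BasisEquiv b J) := Relation.EqvGen.is_equivalence _
  obtain ⟨h1, -⟩ := ExpAux.aux b (Finset.univ : Finset (Fin n)).card Finset.univ le_rfl ν htri
    (fun j _ i _ => Finset.mem_univ i) I J (fun y _ i _ => Finset.mem_univ i)
    (BasisEquiv b I) (BasisEquiv b J) hσI hσJ
    (ExpAux.class_proj_mem b I) (ExpAux.class_proj_mem b J) hbI hbJ hIJ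
  exact h1
end

section
/- Let p : E → B and q : F → E be k-linear functors between k-categories with E connected, and set r = p ∘ q. If any two of p, q, r are covering functors, then so is the third. -/
/-- A `k`-category: a (locally small) category whose Hom-sets are `k`-vector spaces with
bilinear composition. -/
structure KCat (k : Type) [Field k] : Type 1 where
  Obj : Type
  Hom : Obj → Obj → Type
  instAdd : ∀ x y, AddCommGroup (Hom x y)
  instMod : ∀ x y, Module k (Hom x y)
  id : ∀ x, Hom x x
  comp : ∀ {x y z}, Hom y z → Hom x y → Hom x z
  id_comp : ∀ {x y} (f : Hom x y), comp (id y) f = f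
  comp_id : ∀ {x y} (f : Hom x y), comp f (id x) = f
  assoc : ∀ {w x y z} (f : Hom y z) (g : Hom x y) (h : Hom w x),
    comp (comp f g) h = comp f (comp g h)
  comp_add : ∀ {x y z} (f : Hom y z) (g g' : Hom x y), comp f (g + g') = comp f g + comp f g'
  add_comp : ∀ {x y z} (f f' : Hom y z) (g : Hom x y), comp (f + f') g = comp f g + comp f' g
  comp_smul : ∀ {x y z} (c : k) (f : Hom y z) (g : Hom x y), comp f (c • g) = c • comp f g
  smul_comp : ∀ {x y z} (c : k) (f : Hom y z) (g : Hom x y), comp (c • f) g = c • comp f g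

attribute [instance] KCat.instAdd KCat.instMod

variable {k : Type} [Field k]

/-- A `k`-linear functor between `k`-categories. -/
structure KFunctor (C D : KCat k) where
  obj : C.Obj → D.Obj
  map : ∀ {x y}, C.Hom x y → D.Hom (obj x) (obj y)
  map_id : ∀ x, map (C.id x) = D.id (obj x)
  map_comp : ∀ {x y z} (f : C.Hom y z) (g : C.Hom x y), map (C.comp f g) = D.comp (map f) (map g)
  map_add : ∀ {x y} (f g : C.Hom x y), map (f + g) = map f + map g
  map_smul : ∀ {x y} (c : k) (f : C.Hom x y), map (c • f) = c • map f

namespace KFunctor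

variable {B C D E : KCat k}

/-- Composition of `k`-linear functors. -/
def comp (F : KFunctor D E) (G : KFunctor C D) : KFunctor C E where
  obj := fun x => F.obj (G.obj x)
  map := fun f => F.map (G.map f)
  map_id := fun x => by
    show F.map (G.map (C.id x)) = _
    rw [G.map_id, F.map_id]
  map_comp := fun f g => by
    show F.map (G.map (C.comp f g)) = _
    rw [G.map_comp, F.map_comp]
  map_add := fun f g => by
    show F.map (G.map (f + g)) = _
    rw [G.map_add, F.map_add]
  map_smul := fun c f => by
    show F.map (G.map (c • f)) = _
    rw [G.map_smul, F.map_smul]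

/-- The identity functor. -/
def idF (C : KCat k) : KFunctor C C where
  obj := fun x => x
  map := fun f => f
  map_id := fun _ => rfl
  map_comp := fun _ _ => rfl
  map_add := fun _ _ => rfl
  map_smul := fun _ _ => rfl

instance : Monoid (KFunctor C C) where
  mul := comp
  one := idF C
  mul_assoc := fun _ _ _ => rfl
  one_mul := fun _ => rfl
  mul_one := fun _ => rfl

theorem mul_def (F G : KFunctor C C) : F * G = F.comp G := rfl

end KFunctor

/-- Transport of a morphism along an equality of targets. -/
def castTgt (D : KCat k) {x y z : D.Obj} (h : y = z) : D.Hom x y →+ D.Hom x z :=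
  AddMonoidHom.mk' (fun f => h ▸ f) (by subst h; intro a b; rfl)

/-- Transport of a morphism along an equality of sources. -/
def castSrc (D : KCat k) {x y z : D.Obj} (h : x = z) : D.Hom x y →+ D.Hom z y :=
  AddMonoidHom.mk' (fun f => h ▸ f) (by subst h; intro a b; rfl)

variable {C D : KCat k}

/-- The map `⊕_{F yh = y₀} Hom(xh₀, yh) → Hom(F xh₀, y₀)` induced by a functor `F`. -/
noncomputable def outMap (F : KFunctor C D) (x₀ : C.Obj) (y₀ : D.Obj) :
    (Π₀ yh : {yh : C.Obj // F.obj yh = y₀}, C.Hom x₀ yh.1) → D.Hom (F.obj x₀) y₀ :=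
  letI := Classical.decEq {yh : C.Obj // F.obj yh = y₀}
  fun d => DFinsupp.sumAddHom
    (fun yh => (castTgt D yh.2).comp (AddMonoidHom.mk' F.map (fun a b => F.map_add a b))) d

/-- The map `⊕_{F xh = x₀} Hom(xh, yh₀) → Hom(x₀, F yh₀)` induced by a functor `F`. -/
noncomputable def inMap (F : KFunctor C D) (x₀ : D.Obj) (y₀ : C.Obj) :
    (Π₀ xh : {xh : C.Obj // F.obj xh = x₀}, C.Hom xh.1 y₀) → D.Hom x₀ (F.obj y₀) :=
  letI := Classical.decEq {xh : C.Obj // F.obj xh = x₀}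
  fun d => DFinsupp.sumAddHom
    (fun xh => (castSrc D xh.2).comp (AddMonoidHom.mk' F.map (fun a b => F.map_add a b))) d

/-- `F` is a covering functor: it is surjective on objects and the natural maps
`⊕_{F yh = y₀} Hom(xh₀, yh) → Hom(F xh₀, y₀)` and `⊕_{F xh = x₀} Hom(xh, yh₀) → Hom(x₀, F yh₀)`
are bijective. -/
def IsCovering (F : KFunctor C D) : Prop :=
  (∀ y : D.Obj, ∃ x : C.Obj, F.obj x = y) ∧
  (∀ (x₀ : C.Obj) (y₀ : D.Obj), Function.Bijective (outMap F x₀ y₀)) ∧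
  (∀ (x₀ : D.Obj) (y₀ : C.Obj), Function.Bijective (inMap F x₀ y₀))

/-- A `k`-category is connected if any two objects are linked by a chain of objects with a
nonzero morphism space in one direction or the other. -/
def KConnected (C : KCat k) : Prop :=
  ∀ x y : C.Obj,
    Relation.ReflTransGen (fun a b => (∃ f : C.Hom a b, f ≠ 0) ∨ (∃ f : C.Hom b a, f ≠ 0)) x y

/-- A Galois covering with group `G`: a covering functor together with a `G`-action on the
source, over the base, which is free on objects and transitive on each fibre (equivalently,
`F` factors as the quotient by the free `G`-action followed by an isomorphism). -/
structure GaloisCov {C D : KCat k} (F : KFunctor C D) (G : Type) [Group G] where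
  act : G →* KFunctor C C
  over_base : ∀ g : G, F.comp (act g) = F
  free : ∀ (g : G) (x : C.Obj), (act g).obj x = x → g = 1
  surj : ∀ y : D.Obj, ∃ x : C.Obj, F.obj x = y
  trans : ∀ x x' : C.Obj, F.obj x = F.obj x' → ∃ g : G, (act g).obj x = x'
  cov : IsCovering F

section TTT

open DFinsupp

/-- bundled map of a functor as AddMonoidHom -/
def KFunctor.mapHom {C D : KCat k} (F : KFunctor C D) {x y : C.Obj} :
    C.Hom x y →+ D.Hom (F.obj x) (F.obj y) :=
  AddMonoidHom.mk' F.map (fun a b => F.map_add a b)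

/-- outMap as a bundled AddMonoidHom -/
noncomputable def outHom {C D : KCat k} (F : KFunctor C D) (x₀ : C.Obj) (y₀ : D.Obj)
    [DecidableEq {yh : C.Obj // F.obj yh = y₀}] :
    (Π₀ yh : {yh : C.Obj // F.obj yh = y₀}, C.Hom x₀ yh.1) →+ D.Hom (F.obj x₀) y₀ :=
  DFinsupp.sumAddHom (fun yh => (castTgt D yh.2).comp F.mapHom)

theorem outMap_eq_outHom {C D : KCat k} (F : KFunctor C D) (x₀ : C.Obj) (y₀ : D.Obj)
    [inst : DecidableEq {yh : C.Obj // F.obj yh = y₀}] :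
    outMap F x₀ y₀ = ⇑(outHom F x₀ y₀) := by
  obtain rfl : inst = Classical.decEq _ := Subsingleton.elim _ _
  rfl

theorem outHom_single {C D : KCat k} (F : KFunctor C D) (x₀ : C.Obj) (y₀ : D.Obj)
    [DecidableEq {yh : C.Obj // F.obj yh = y₀}]
    (yh : {yh : C.Obj // F.obj yh = y₀}) (f : C.Hom x₀ yh.1) :
    outHom F x₀ y₀ (DFinsupp.single yh f) = castTgt D yh.2 (F.map f) :=
  DFinsupp.sumAddHom_single
    (fun yh : {yh : C.Obj // F.obj yh = y₀} => (castTgt D yh.2).comp F.mapHom) yh f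

section Core

variable {A C D : KCat k} (q : KFunctor A C) (p : KFunctor C D) (x₀ : A.Obj) (y₀ : D.Obj)

section Defs

variable [DecidableEq {e : C.Obj // p.obj e = y₀}]
  [DecidableEq {i : A.Obj // (p.comp q).obj i = y₀}]

noncomputable def phiHom :
    (Π₀ i : {i : A.Obj // (p.comp q).obj i = y₀}, A.Hom x₀ i.1) →+
      (Π₀ e : {e : C.Obj // p.obj e = y₀}, C.Hom (q.obj x₀) e.1) :=
  DFinsupp.sumAddHom (fun i =>
    (DFinsupp.singleAddHom (fun e : {e : C.Obj // p.obj e = y₀} => C.Hom (q.obj x₀) e.1)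
      ⟨q.obj i.1, i.2⟩).comp q.mapHom)

noncomputable def rhoHom [DecidableEq C.Obj] (e : {e : C.Obj // p.obj e = y₀})
    [DecidableEq {j : A.Obj // q.obj j = e.1}] :
    (Π₀ i : {i : A.Obj // (p.comp q).obj i = y₀}, A.Hom x₀ i.1) →+
      (Π₀ j : {j : A.Obj // q.obj j = e.1}, A.Hom x₀ j.1) :=
  DFinsupp.sumAddHom (fun i =>
    if h : q.obj i.1 = e.1 then
      DFinsupp.singleAddHom (fun j : {j : A.Obj // q.obj j = e.1} => A.Hom x₀ j.1) ⟨i.1, h⟩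
    else 0)

noncomputable def extHom (e : {e : C.Obj // p.obj e = y₀})
    [DecidableEq {j : A.Obj // q.obj j = e.1}] :
    (Π₀ j : {j : A.Obj // q.obj j = e.1}, A.Hom x₀ j.1) →+
      (Π₀ i : {i : A.Obj // (p.comp q).obj i = y₀}, A.Hom x₀ i.1) :=
  DFinsupp.sumAddHom (fun j =>
    DFinsupp.singleAddHom (fun i : {i : A.Obj // (p.comp q).obj i = y₀} => A.Hom x₀ i.1)
      ⟨j.1, show p.obj (q.obj j.1) = y₀ from by rw [j.2]; exact e.2⟩)

theorem phiHom_single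
    (i : {i : A.Obj // (p.comp q).obj i = y₀}) (f : A.Hom x₀ i.1) :
    phiHom q p x₀ y₀ (DFinsupp.single i f) =
      DFinsupp.single (β := fun e : {e : C.Obj // p.obj e = y₀} => C.Hom (q.obj x₀) e.1)
        ⟨q.obj i.1, i.2⟩ (q.map f) :=
  DFinsupp.sumAddHom_single
    (fun i : {i : A.Obj // (p.comp q).obj i = y₀} =>
      (DFinsupp.singleAddHom (fun e : {e : C.Obj // p.obj e = y₀} => C.Hom (q.obj x₀) e.1)
        ⟨q.obj i.1, i.2⟩).comp q.mapHom) i f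

set_option linter.unusedSectionVars false in
theorem rhoHom_single [DecidableEq C.Obj]
    (e : {e : C.Obj // p.obj e = y₀})
    [DecidableEq {j : A.Obj // q.obj j = e.1}]
    (i : {i : A.Obj // (p.comp q).obj i = y₀}) (f : A.Hom x₀ i.1) :
    rhoHom q p x₀ y₀ e (DFinsupp.single i f) =
      if h : q.obj i.1 = e.1 then
        DFinsupp.single (β := fun j : {j : A.Obj // q.obj j = e.1} => A.Hom x₀ j.1) ⟨i.1, h⟩ f
      else 0 := by
  refine (DFinsupp.sumAddHom_single
    ((fun i => if h : q.obj i.1 = e.1 then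
        DFinsupp.singleAddHom (fun j : {j : A.Obj // q.obj j = e.1} => A.Hom x₀ j.1) ⟨i.1, h⟩
      else 0) : ∀ i : {i : A.Obj // (p.comp q).obj i = y₀},
        A.Hom x₀ i.1 →+ (Π₀ j : {j : A.Obj // q.obj j = e.1}, A.Hom x₀ j.1)) i f).trans ?_
  by_cases h : q.obj i.1 = e.1
  · rw [dif_pos h, dif_pos h]; rfl
  · rw [dif_neg h, dif_neg h]; rfl

set_option linter.unusedSectionVars false in
theorem extHom_single
    (e : {e : C.Obj // p.obj e = y₀})
    [DecidableEq {j : A.Obj // q.obj j = e.1}]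
    (j : {j : A.Obj // q.obj j = e.1}) (f : A.Hom x₀ j.1) :
    extHom q p x₀ y₀ e (DFinsupp.single j f) =
      DFinsupp.single (β := fun i : {i : A.Obj // (p.comp q).obj i = y₀} => A.Hom x₀ i.1)
        ⟨j.1, show p.obj (q.obj j.1) = y₀ from by rw [j.2]; exact e.2⟩ f :=
  DFinsupp.sumAddHom_single
    (fun j : {j : A.Obj // q.obj j = e.1} =>
      DFinsupp.singleAddHom (fun i : {i : A.Obj // (p.comp q).obj i = y₀} => A.Hom x₀ i.1)
        ⟨j.1, show p.obj (q.obj j.1) = y₀ from by rw [j.2]; exact e.2⟩) j f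

theorem L1 : (outHom p (q.obj x₀) y₀).comp (phiHom q p x₀ y₀) = outHom (p.comp q) x₀ y₀ := by
  apply DFinsupp.addHom_ext
  intro i f
  show outHom p (q.obj x₀) y₀ (phiHom q p x₀ y₀ (DFinsupp.single i f)) = _
  rw [phiHom_single, outHom_single]
  exact (DFinsupp.sumAddHom_single
    (fun yh : {yh : A.Obj // (p.comp q).obj yh = y₀} => (castTgt D yh.2).comp (p.comp q).mapHom)
    i f).symm

theorem L2 [DecidableEq C.Obj] (e : {e : C.Obj // p.obj e = y₀})
    [DecidableEq {j : A.Obj // q.obj j = e.1}]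
    (d : Π₀ i : {i : A.Obj // (p.comp q).obj i = y₀}, A.Hom x₀ i.1) :
    (phiHom q p x₀ y₀ d) e = outHom q x₀ e.1 (rhoHom q p x₀ y₀ e d) := by
  have key : ((Pi.evalAddMonoidHom (fun e : {e : C.Obj // p.obj e = y₀} =>
        C.Hom (q.obj x₀) e.1) e).comp
          ((DFinsupp.coeFnAddMonoidHom).comp (phiHom q p x₀ y₀))) =
      (outHom q x₀ e.1).comp (rhoHom q p x₀ y₀ e) := by
    apply DFinsupp.addHom_ext
    intro i f
    show (phiHom q p x₀ y₀ (DFinsupp.single i f)) e =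
      outHom q x₀ e.1 (rhoHom q p x₀ y₀ e (DFinsupp.single i f))
    rw [phiHom_single, rhoHom_single]
    by_cases h : q.obj i.1 = e.1
    · rw [dif_pos h, outHom_single]
      obtain ⟨e1, pe⟩ := e
      dsimp only at h
      subst h
      exact DFinsupp.single_eq_same
    · rw [dif_neg h, map_zero]
      exact DFinsupp.single_eq_of_ne (fun hh => h (congrArg Subtype.val hh).symm)
  exact DFunLike.congr_fun key d

theorem L3 [DecidableEq C.Obj] (e : {e : C.Obj // p.obj e = y₀})
    [DecidableEq {j : A.Obj // q.obj j = e.1}]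
    (c : Π₀ j : {j : A.Obj // q.obj j = e.1}, A.Hom x₀ j.1) :
    rhoHom q p x₀ y₀ e (extHom q p x₀ y₀ e c) = c := by
  have key : (rhoHom q p x₀ y₀ e).comp (extHom q p x₀ y₀ e) = AddMonoidHom.id _ := by
    apply DFinsupp.addHom_ext
    intro j f
    show rhoHom q p x₀ y₀ e (extHom q p x₀ y₀ e (DFinsupp.single j f)) = DFinsupp.single j f
    rw [extHom_single, rhoHom_single, dif_pos j.2]
  exact DFunLike.congr_fun key c

theorem L4 (e : {e : C.Obj // p.obj e = y₀})
    [DecidableEq {j : A.Obj // q.obj j = e.1}]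
    (c : Π₀ j : {j : A.Obj // q.obj j = e.1}, A.Hom x₀ j.1) :
    phiHom q p x₀ y₀ (extHom q p x₀ y₀ e c) = DFinsupp.single e (outHom q x₀ e.1 c) := by
  have key : (phiHom q p x₀ y₀).comp (extHom q p x₀ y₀ e) =
      (DFinsupp.singleAddHom (fun e : {e : C.Obj // p.obj e = y₀} => C.Hom (q.obj x₀) e.1)
        e).comp (outHom q x₀ e.1) := by
    apply DFinsupp.addHom_ext
    intro j f
    show phiHom q p x₀ y₀ (extHom q p x₀ y₀ e (DFinsupp.single j f)) =
      DFinsupp.single e (outHom q x₀ e.1 (DFinsupp.single j f))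
    rw [extHom_single, phiHom_single, outHom_single]
    obtain ⟨e1, pe⟩ := e
    obtain ⟨j1, hj⟩ := j
    dsimp only at hj ⊢
    subst hj
    rfl
  exact DFunLike.congr_fun key c

theorem L5 [DecidableEq C.Obj]
    [∀ e : C.Obj, DecidableEq {j : A.Obj // q.obj j = e}]
    (i : {i : A.Obj // (p.comp q).obj i = y₀})
    (d : Π₀ i : {i : A.Obj // (p.comp q).obj i = y₀}, A.Hom x₀ i.1) :
    (rhoHom q p x₀ y₀ ⟨q.obj i.1, i.2⟩ d) ⟨i.1, rfl⟩ = d i := by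
  have key : ((Pi.evalAddMonoidHom (fun j : {j : A.Obj // q.obj j = q.obj i.1} =>
        A.Hom x₀ j.1) ⟨i.1, rfl⟩).comp
          ((DFinsupp.coeFnAddMonoidHom).comp
            (rhoHom q p x₀ y₀ ⟨q.obj i.1, i.2⟩))) =
      (Pi.evalAddMonoidHom (fun i : {i : A.Obj // (p.comp q).obj i = y₀} =>
        A.Hom x₀ i.1) i).comp (DFinsupp.coeFnAddMonoidHom) := by
    apply DFinsupp.addHom_ext
    intro i' f
    show (rhoHom q p x₀ y₀ ⟨q.obj i.1, i.2⟩ (DFinsupp.single i' f)) ⟨i.1, rfl⟩ =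
      (DFinsupp.single (β := fun i : {i : A.Obj // (p.comp q).obj i = y₀} => A.Hom x₀ i.1)
        i' f) i
    rw [rhoHom_single]
    by_cases hii : i' = i
    · subst hii
      rw [dif_pos rfl]
      exact DFinsupp.single_eq_same.trans
        (DFinsupp.single_eq_same
          (β := fun i : {i : A.Obj // (p.comp q).obj i = y₀} => A.Hom x₀ i.1)
          (i := i') (b := f)).symm
    · rw [DFinsupp.single_eq_of_ne (Ne.symm hii)]
      by_cases h : q.obj i'.1 = q.obj i.1
      · rw [dif_pos h]
        exact DFinsupp.single_eq_of_ne
          (fun hh => hii (Subtype.ext (by have := congrArg Subtype.val hh; exact this.symm)))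
      · rw [dif_neg h]; rfl
  exact DFunLike.congr_fun key d

theorem rho_faithful [DecidableEq C.Obj]
    [∀ e : C.Obj, DecidableEq {j : A.Obj // q.obj j = e}]
    (d d' : Π₀ i : {i : A.Obj // (p.comp q).obj i = y₀}, A.Hom x₀ i.1)
    (h : ∀ e : {e : C.Obj // p.obj e = y₀},
      rhoHom q p x₀ y₀ e d = rhoHom q p x₀ y₀ e d') : d = d' := by
  apply DFunLike.ext
  intro i
  rw [← L5 q p x₀ y₀ i d, ← L5 q p x₀ y₀ i d', h ⟨q.obj i.1, i.2⟩]

theorem phi_bijective [DecidableEq C.Obj]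
    [∀ e : C.Obj, DecidableEq {j : A.Obj // q.obj j = e}]
    (hq : ∀ e : {e : C.Obj // p.obj e = y₀}, Function.Bijective (outHom q x₀ e.1)) :
    Function.Bijective (phiHom q p x₀ y₀) := by
  constructor
  · intro d d' hdd
    refine rho_faithful q p x₀ y₀ d d' (fun e => (hq e).1 ?_)
    rw [← L2, ← L2, hdd]
  · intro t
    induction t using DFinsupp.induction with
    | h0 => exact ⟨0, map_zero _⟩
    | ha e g t _ _ ih =>
      obtain ⟨d, hd⟩ := ih
      obtain ⟨c, hc⟩ := (hq e).2 g
      refine ⟨extHom q p x₀ y₀ e c + d, ?_⟩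
      rw [map_add, hd, L4, hc]

theorem phi_bijective_rev [DecidableEq C.Obj]
    [∀ e : C.Obj, DecidableEq {j : A.Obj // q.obj j = e}]
    (hphi : Function.Bijective (phiHom q p x₀ y₀))
    (e : {e : C.Obj // p.obj e = y₀}) : Function.Bijective (outHom q x₀ e.1) := by
  constructor
  · intro a b hab
    have h1 : phiHom q p x₀ y₀ (extHom q p x₀ y₀ e a) =
        phiHom q p x₀ y₀ (extHom q p x₀ y₀ e b) := by
      rw [L4, L4, hab]
    have h2 := hphi.1 h1
    calc a = rhoHom q p x₀ y₀ e (extHom q p x₀ y₀ e a) := (L3 q p x₀ y₀ e a).symm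
    _ = rhoHom q p x₀ y₀ e (extHom q p x₀ y₀ e b) := by rw [h2]
    _ = b := L3 q p x₀ y₀ e b
  · intro t
    obtain ⟨d, hd⟩ := hphi.2 (DFinsupp.single e t)
    refine ⟨rhoHom q p x₀ y₀ e d, ?_⟩
    rw [← L2, hd]
    exact DFinsupp.single_eq_same

end Defs
end Core
end TTT
section Transfer

/-- Bijectivity of all out-maps. -/
def OutBij {C D : KCat k} (F : KFunctor C D) : Prop :=
  ∀ (x₀ : C.Obj) (y₀ : D.Obj), Function.Bijective (outMap F x₀ y₀)

/-- Bijectivity of all in-maps. -/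
def InBij {C D : KCat k} (F : KFunctor C D) : Prop :=
  ∀ (x₀ : D.Obj) (y₀ : C.Obj), Function.Bijective (inMap F x₀ y₀)

theorem isCovering_iff {C D : KCat k} (F : KFunctor C D) :
    IsCovering F ↔ (∀ y : D.Obj, ∃ x : C.Obj, F.obj x = y) ∧ OutBij F ∧ InBij F := Iff.rfl

section Main

variable {A C D : KCat k} (q : KFunctor A C) (p : KFunctor C D)

theorem comp_outBij (hp : OutBij p) (hq : OutBij q) : OutBij (p.comp q) := by
  intro x₀ y₀
  letI := Classical.decEq {e : C.Obj // p.obj e = y₀}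
  letI := Classical.decEq {i : A.Obj // (p.comp q).obj i = y₀}
  letI : DecidableEq C.Obj := Classical.decEq _
  letI : ∀ e : C.Obj, DecidableEq {j : A.Obj // q.obj j = e} := fun e => Classical.decEq _
  rw [outMap_eq_outHom, ← L1]
  have h1 : Function.Bijective (outHom p (q.obj x₀) y₀) := by
    have := hp (q.obj x₀) y₀; rwa [outMap_eq_outHom] at this
  have h2 : Function.Bijective (phiHom q p x₀ y₀) := by
    refine phi_bijective q p x₀ y₀ (fun e => ?_)
    have := hq x₀ e.1; rwa [outMap_eq_outHom] at this
  exact h1.comp h2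

theorem p_outBij (hq : OutBij q) (hr : OutBij (p.comp q))
    (hqs : ∀ e : C.Obj, ∃ a : A.Obj, q.obj a = e) : OutBij p := by
  intro x₀ y₀
  obtain ⟨xh, rfl⟩ := hqs x₀
  letI := Classical.decEq {e : C.Obj // p.obj e = y₀}
  letI := Classical.decEq {i : A.Obj // (p.comp q).obj i = y₀}
  letI : DecidableEq C.Obj := Classical.decEq _
  letI : ∀ e : C.Obj, DecidableEq {j : A.Obj // q.obj j = e} := fun e => Classical.decEq _
  have hphi : Function.Bijective (phiHom q p xh y₀) :=
    phi_bijective q p xh y₀ (fun e => by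
      have := hq xh e.1; rwa [outMap_eq_outHom] at this)
  have hrb := hr xh y₀
  rw [outMap_eq_outHom, ← L1] at hrb
  rw [outMap_eq_outHom]
  constructor
  · intro a b hab
    obtain ⟨da, rfl⟩ := hphi.2 a
    obtain ⟨db, rfl⟩ := hphi.2 b
    exact congrArg _ (hrb.1 hab)
  · intro t
    obtain ⟨d, hd⟩ := hrb.2 t
    exact ⟨phiHom q p xh y₀ d, hd⟩

theorem q_outBij (hp : OutBij p) (hr : OutBij (p.comp q)) : OutBij q := by
  intro x₀ y
  letI := Classical.decEq {e : C.Obj // p.obj e = p.obj y}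
  letI := Classical.decEq {i : A.Obj // (p.comp q).obj i = p.obj y}
  letI : DecidableEq C.Obj := Classical.decEq _
  letI : ∀ e : C.Obj, DecidableEq {j : A.Obj // q.obj j = e} := fun e => Classical.decEq _
  have hpb := hp (q.obj x₀) (p.obj y)
  have hrb := hr x₀ (p.obj y)
  rw [outMap_eq_outHom] at hpb
  rw [outMap_eq_outHom, ← L1] at hrb
  have hphi : Function.Bijective (phiHom q p x₀ (p.obj y)) := by
    constructor
    · intro a b hab
      exact hrb.1 (show outHom p (q.obj x₀) (p.obj y) (phiHom q p x₀ (p.obj y) a) =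
        outHom p (q.obj x₀) (p.obj y) (phiHom q p x₀ (p.obj y) b) from by rw [hab])
    · intro u
      obtain ⟨d, hd⟩ := hrb.2 (outHom p (q.obj x₀) (p.obj y) u)
      exact ⟨d, hpb.1 hd⟩
  have := phi_bijective_rev q p x₀ (p.obj y) hphi ⟨y, rfl⟩
  rwa [outMap_eq_outHom]

theorem fiber_nonempty_of_out (xh : A.Obj) (e' : C.Obj)
    (hbij : Function.Bijective (outMap q xh e')) (f : C.Hom (q.obj xh) e') (hf : f ≠ 0) :
    ∃ yh : A.Obj, q.obj yh = e' := by
  by_contra hemp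
  push_neg at hemp
  obtain ⟨d, hd⟩ := hbij.2 f
  letI := Classical.decEq {yh : A.Obj // q.obj yh = e'}
  have hd0 : d = 0 := DFunLike.ext _ _ (fun j => absurd j.2 (hemp j.1))
  rw [hd0, outMap_eq_outHom, map_zero] at hd
  exact hf hd.symm

end Main

/-! ### Opposites -/

/-- The opposite `k`-category. -/
def KCat.op (C : KCat k) : KCat k where
  Obj := C.Obj
  Hom x y := C.Hom y x
  instAdd x y := C.instAdd y x
  instMod x y := C.instMod y x
  id := C.id
  comp f g := C.comp g f
  id_comp := C.comp_id
  comp_id := C.id_comp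
  assoc f g h := (C.assoc h g f).symm
  comp_add f g g' := C.add_comp g g' f
  add_comp f f' g := C.comp_add g f f'
  comp_smul c f g := C.smul_comp c g f
  smul_comp c f g := C.comp_smul c g f

/-- The opposite functor. -/
def KFunctor.op {C D : KCat k} (F : KFunctor C D) : KFunctor C.op D.op where
  obj := F.obj
  map := F.map
  map_id := F.map_id
  map_comp f g := F.map_comp g f
  map_add := F.map_add
  map_smul := F.map_smul

theorem op_comp {A C D : KCat k} (q : KFunctor A C) (p : KFunctor C D) :
    (p.comp q).op = p.op.comp q.op := rfl

theorem inMap_eq_op {C D : KCat k} (F : KFunctor C D) (x₀ : D.Obj) (y₀ : C.Obj) :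
    inMap F x₀ y₀ = outMap F.op y₀ x₀ := rfl

theorem outMap_eq_op {C D : KCat k} (F : KFunctor C D) (x₀ : C.Obj) (y₀ : D.Obj) :
    outMap F x₀ y₀ = inMap F.op y₀ x₀ := rfl

theorem outBij_op {C D : KCat k} (F : KFunctor C D) : OutBij F.op ↔ InBij F :=
  ⟨fun h x y => h y x, fun h x y => h y x⟩

theorem inBij_op {C D : KCat k} (F : KFunctor C D) : InBij F.op ↔ OutBij F :=
  ⟨fun h x y => h y x, fun h x y => h y x⟩

end Transfer

/-- Let `p : E → B` and `q : F → E` be `k`-linear functors with `E` connected and `r = p ∘ q`.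
If any two of `p`, `q`, `r` are covering functors, then so is the third. -/
theorem two_out_of_three_covering {Fc E B : KCat k}
    (p : KFunctor E B) (q : KFunctor Fc E) (hconn : KConnected E) :
    (IsCovering p → IsCovering q → IsCovering (p.comp q)) ∧
    (IsCovering q → IsCovering (p.comp q) → IsCovering p) ∧
    (IsCovering p → IsCovering (p.comp q) → IsCovering q) := by
  refine ⟨?_, ?_, ?_⟩
  · rintro ⟨hps, hpo, hpi⟩ ⟨hqs, hqo, hqi⟩
    refine ⟨?_, comp_outBij q p hpo hqo, ?_⟩
    · intro y
      obtain ⟨e, he⟩ := hps y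
      obtain ⟨a, ha⟩ := hqs e
      exact ⟨a, show p.obj (q.obj a) = y from by rw [ha, he]⟩
    · exact (outBij_op (p.comp q)).mp
        (comp_outBij q.op p.op ((outBij_op p).mpr hpi) ((outBij_op q).mpr hqi))
  · rintro ⟨hqs, hqo, hqi⟩ ⟨hrs, hro, hri⟩
    refine ⟨?_, p_outBij q p hqo hro hqs, ?_⟩
    · intro b
      obtain ⟨a, ha⟩ := hrs b
      exact ⟨q.obj a, ha⟩
    · exact (outBij_op p).mp
        (p_outBij q.op p.op ((outBij_op q).mpr hqi) ((outBij_op (p.comp q)).mpr hri) hqs)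
  · rintro ⟨hps, hpo, hpi⟩ ⟨hrs, hro, hri⟩
    have hqo : OutBij q := q_outBij q p hpo hro
    have hqi : InBij q := (outBij_op q).mp
      (q_outBij q.op p.op ((outBij_op p).mpr hpi) ((outBij_op (p.comp q)).mpr hri))
    refine ⟨?_, hqo, hqi⟩
    intro e
    obtain ⟨a0, -⟩ := hrs (p.obj e)
    have main : ∀ {b : E.Obj},
        Relation.ReflTransGen
          (fun a b => (∃ f : E.Hom a b, f ≠ 0) ∨ (∃ f : E.Hom b a, f ≠ 0))
          (q.obj a0) b → ∃ a : Fc.Obj, q.obj a = b := by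
      intro b h
      induction h with
      | refl => exact ⟨a0, rfl⟩
      | tail h1 step ih =>
        obtain ⟨xh, hx⟩ := ih
        subst hx
        rcases step with ⟨f, hf⟩ | ⟨f, hf⟩
        · exact fiber_nonempty_of_out q xh _ (hqo xh _) f hf
        · exact fiber_nonempty_of_out q.op xh _ (hqi _ xh) f hf
    exact main (hconn (q.obj a0) e)
end
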